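/- Let (Ω, μ) be a probability space, let X : Ω → 𝒳 and Y : Ω → 𝒴 be measurable random variables with finite ranges, and let c : Ω → List Bool be a measurable transcript function with countable range and finite expected length C = E[|c(ω)|]. Suppose (i) for all ω, ω' ∈ Ω with X(ω) = X(ω'), if c(ω) is a prefix of c(ω') then c(ω) = c(ω'); and (ii) for all ω, ω' ∈ Ω, if X(ω) = X(ω') and c(ω) = c(ω') then Y(ω) = Y(ω'). Then H(Y) ≤ H(X) + C. -/

import Mathlib

open MeasureTheory
open scoped ENNReal

lemma kraft_nat (s : Finset (List Bool))
    (h : ∀ l ∈ s, ∀ l' ∈ s, l <+: l' → l = l') (n : ℕ) (hn : ∀ l ∈ s, l.length ≤ n) :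
    ∑ l ∈ s, 2 ^ (n - l.length) ≤ 2 ^ n := by
  classical
  set F : Finset (List Bool) := Finset.univ.image (fun f : Fin n → Bool => List.ofFn f) with hF
  set g : List Bool → Finset (List Bool) :=
    fun l => Finset.univ.image (fun f : Fin (n - l.length) → Bool => l ++ List.ofFn f) with hg
  have hcard : ∀ l ∈ s, (g l).card = 2 ^ (n - l.length) := by
    intro l hl
    rw [hg, Finset.card_image_of_injective]
    · simp
    · intro a b hab
      simp only [List.append_cancel_left_eq] at hab
      exact List.ofFn_injective hab
  have hsub : s.biUnion g ⊆ F := by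
    intro w hw
    simp only [Finset.mem_biUnion] at hw
    obtain ⟨l, hl, hwl⟩ := hw
    simp only [hg, Finset.mem_image, Finset.mem_univ, true_and] at hwl
    obtain ⟨f, rfl⟩ := hwl
    have hlen : (l ++ List.ofFn f).length = n := by
      simp [Nat.add_sub_cancel' (hn l hl)]
    simp only [hF, Finset.mem_image, Finset.mem_univ, true_and]
    refine ⟨fun i => (l ++ List.ofFn f).get (Fin.cast hlen.symm i), ?_⟩
    apply List.ext_get (by simp [hlen])
    intro i h1 h2
    simp [List.get_ofFn]
  have hdisj : ∀ l ∈ s, ∀ l' ∈ s, l ≠ l' → Disjoint (g l) (g l') := by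
    intro l hl l' hl' hne
    rw [Finset.disjoint_left]
    intro w hwl hwl'
    simp only [hg, Finset.mem_image, Finset.mem_univ, true_and] at hwl hwl'
    obtain ⟨f, rfl⟩ := hwl
    obtain ⟨f', he⟩ := hwl'
    apply hne
    rcases le_total l.length l'.length with hle | hle
    · exact h l hl l' hl' (List.prefix_of_prefix_length_le ⟨_, he.symm⟩ (List.prefix_append _ _) hle)
    · exact (h l' hl' l hl (List.prefix_of_prefix_length_le (List.prefix_append _ _) ⟨_, he.symm⟩ hle)).symm
  calc ∑ l ∈ s, 2 ^ (n - l.length) = ∑ l ∈ s, (g l).card := by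
        exact Finset.sum_congr rfl fun l hl => (hcard l hl).symm
    _ = (s.biUnion g).card := (Finset.card_biUnion hdisj).symm
    _ ≤ F.card := Finset.card_le_card hsub
    _ ≤ 2 ^ n := by
        rw [hF]
        calc _ ≤ (Finset.univ : Finset (Fin n → Bool)).card := Finset.card_image_le
          _ = 2 ^ n := by simp

lemma kraft_finset (s : Finset (List Bool))
    (h : ∀ l ∈ s, ∀ l' ∈ s, l <+: l' → l = l') :
    ∑ l ∈ s, ((2:ℝ)⁻¹) ^ l.length ≤ 1 := by
  classical
  set n := s.sup List.length with hn
  have hle : ∀ l ∈ s, l.length ≤ n := fun l hl => Finset.le_sup hl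
  have key := kraft_nat s h n hle
  have : ∑ l ∈ s, ((2:ℝ)⁻¹) ^ l.length = (∑ l ∈ s, (2:ℕ) ^ (n - l.length) : ℕ) / 2 ^ n := by
    push_cast
    rw [Finset.sum_div]
    refine Finset.sum_congr rfl fun l hl => ?_
    rw [eq_div_iff (by positivity), inv_pow, inv_mul_eq_div]
    exact (pow_sub₀ (2:ℝ) two_ne_zero (hle l hl)).symm
  rw [this]
  rw [div_le_one (by positivity)]
  exact_mod_cast key


lemma part_tsum {Ω ι : Type*} [MeasurableSpace Ω] [Countable ι] (μ : Measure Ω) [IsFiniteMeasure μ]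
    (f : ι → Set Ω) (hm : ∀ i, MeasurableSet (f i)) (hd : Pairwise (Function.onFun Disjoint f)) :
    Summable (fun i => (μ (f i)).toReal) ∧ ∑' i, (μ (f i)).toReal = (μ (⋃ i, f i)).toReal := by
  have h : μ (⋃ i, f i) = ∑' i, μ (f i) := measure_iUnion hd hm
  refine ⟨ENNReal.summable_toReal (h ▸ measure_ne_top μ _), ?_⟩
  rw [h, ENNReal.tsum_toReal_eq (fun i => measure_ne_top μ _)]

/-- Shannon entropy (base 2) of a random variable `X` with finite range:
`H(X) = ∑ₓ P[X = x] · log₂(1 / P[X = x])` (terms with `P[X = x] = 0` vanish). -/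
noncomputable def shannonEntropy {Ω α : Type*} [MeasurableSpace Ω] [Fintype α]
    (μ : Measure Ω) (X : Ω → α) : ℝ :=
  ∑ x : α, (μ {ω | X ω = x}).toReal * Real.logb 2 (1 / (μ {ω | X ω = x}).toReal)

/-- If `Y(I)` can be computed from `(I, X(I))` by a comparison-based algorithm whose
transcript `c` has expected length `C = E[|c|]` — i.e. for fixed value of `X` the
transcripts form an antichain under the prefix order, and `(X, c)` determines `Y` —
then `H(Y) ≤ H(X) + C`. -/
theorem stmt2 {Ω 𝒳 𝒴 : Type*} [MeasurableSpace Ω] (μ : Measure Ω) [IsProbabilityMeasure μ]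
    [Fintype 𝒳] [Fintype 𝒴] (X : Ω → 𝒳) (Y : Ω → 𝒴)
    (hX : ∀ x, MeasurableSet {ω | X ω = x})
    (hY : ∀ y, MeasurableSet {ω | Y ω = y})
    (c : Ω → List Bool) (hc : ∀ l, MeasurableSet {ω | c ω = l})
    (hrange : (Set.range c).Countable)
    (hInt : Integrable (fun ω => ((c ω).length : ℝ)) μ)
    (hpref : ∀ ω ω', X ω = X ω' → c ω <+: c ω' → c ω = c ω')
    (hdet : ∀ ω ω', X ω = X ω' → c ω = c ω' → Y ω = Y ω') :
    shannonEntropy μ Y ≤ shannonEntropy μ X + ∫ ω, ((c ω).length : ℝ) ∂μ := by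
  classical
  haveI hT : Countable ↥(Set.range c) := hrange.to_subtype
  -- basic sets
  set A : 𝒳 → ↥(Set.range c) → Set Ω := fun x l => {ω | X ω = x} ∩ {ω | c ω = ↑l} with hA
  set B : 𝒴 → 𝒳 → ↥(Set.range c) → Set Ω := fun y x l => {ω | Y ω = y} ∩ A x l with hB
  set P : 𝒳 → ↥(Set.range c) → ℝ := fun x l => (μ (A x l)).toReal with hPdef
  set R : 𝒴 → 𝒳 → ↥(Set.range c) → ℝ := fun y x l => (μ (B y x l)).toReal with hRdef
  set p : 𝒳 → ℝ := fun x => (μ {ω | X ω = x}).toReal with hpdef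
  set py : 𝒴 → ℝ := fun y => (μ {ω | Y ω = y}).toReal with hpydef
  have measA : ∀ x l, MeasurableSet (A x l) := fun x l => (hX x).inter (hc l)
  have measB : ∀ y x l, MeasurableSet (B y x l) := fun y x l => (hY y).inter (measA x l)
  have memA : ∀ x l ω, ω ∈ A x l ↔ X ω = x ∧ c ω = ↑l := fun x l ω => Iff.rfl
  have memB : ∀ y x l ω, ω ∈ B y x l ↔ Y ω = y ∧ (X ω = x ∧ c ω = ↑l) := fun y x l ω => Iff.rfl
  have disjA : ∀ x, Pairwise (Function.onFun Disjoint (A x)) := by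
    intro x l l' hne
    refine Set.disjoint_left.mpr fun ω h1 h2 => hne ?_
    exact Subtype.ext (h1.2.symm.trans h2.2)
  have disjB : ∀ y x, Pairwise (Function.onFun Disjoint (B y x)) := by
    intro y x l l' hne
    exact Set.disjoint_of_subset Set.inter_subset_right Set.inter_subset_right (disjA x hne)
  have unionA : ∀ x, (⋃ l, A x l) = {ω | X ω = x} := by
    intro x
    ext ω
    simp only [Set.mem_iUnion, Set.mem_inter_iff, Set.mem_setOf_eq]
    constructor
    · rintro ⟨l, h1, -⟩; exact h1
    · intro h; exact ⟨⟨c ω, Set.mem_range_self ω⟩, h, rfl⟩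
  have unionB : ∀ y x, (⋃ l, B y x l) = {ω | Y ω = y} ∩ {ω | X ω = x} := by
    intro y x
    rw [hB]
    simp only [← Set.inter_iUnion]
    rw [unionA]
  -- nonnegativity etc.
  have Pnn : ∀ x l, 0 ≤ P x l := fun x l => ENNReal.toReal_nonneg
  have Rnn : ∀ y x l, 0 ≤ R y x l := fun y x l => ENNReal.toReal_nonneg
  have pnn : ∀ x, 0 ≤ p x := fun x => ENNReal.toReal_nonneg
  have RleP : ∀ y x l, R y x l ≤ P x l := fun y x l =>
    ENNReal.toReal_mono (measure_ne_top μ _) (measure_mono Set.inter_subset_right)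
  have PleP : ∀ x l, P x l ≤ p x := fun x l =>
    ENNReal.toReal_mono (measure_ne_top μ _) (measure_mono Set.inter_subset_left)
  have Ple1 : ∀ x l, P x l ≤ 1 := by
    intro x l
    have := ENNReal.toReal_mono (by simp) (prob_le_one (μ := μ) (s := A x l))
    simpa using this
  -- partitions
  have hsumP : ∀ x, Summable (P x) := fun x => (part_tsum μ (A x) (measA x) (disjA x)).1
  have htsumP : ∀ x, ∑' l, P x l = p x := by
    intro x
    have := (part_tsum μ (A x) (measA x) (disjA x)).2
    rwa [unionA x] at this
  have hsumR : ∀ y x, Summable (R y x) := fun y x => (part_tsum μ (B y x) (measB y x) (disjB y x)).1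
  have htsumR : ∀ y x, ∑' l, R y x l = (μ ({ω | Y ω = y} ∩ {ω | X ω = x})).toReal := by
    intro y x
    have := (part_tsum μ (B y x) (measB y x) (disjB y x)).2
    rwa [unionB y x] at this
  have sumRy : ∀ x l, ∑ y : 𝒴, R y x l = P x l := by
    intro x l
    have hd : Pairwise (Function.onFun Disjoint (fun y => B y x l)) := by
      intro y y' hne
      refine Set.disjoint_left.mpr fun ω h1 h2 => hne ?_
      exact h1.1.symm.trans h2.1
    have hu : (⋃ y, B y x l) = A x l := by
      ext ω
      simp only [Set.mem_iUnion]
      exact ⟨fun ⟨y, h⟩ => h.2, fun h => ⟨Y ω, rfl, h⟩⟩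
    have := (part_tsum μ (fun y => B y x l) (fun y => measB y x l) hd).2
    rw [hu, tsum_fintype] at this
    exact this
  have hpyx : ∀ y, py y = ∑ x : 𝒳, (μ ({ω | Y ω = y} ∩ {ω | X ω = x})).toReal := by
    intro y
    have hd : Pairwise (Function.onFun Disjoint (fun x => {ω | Y ω = y} ∩ {ω | X ω = x})) := by
      intro x x' hne
      refine Set.disjoint_left.mpr fun ω h1 h2 => hne ?_
      exact h1.2.symm.trans h2.2
    have hu : (⋃ x, ({ω | Y ω = y} ∩ {ω | X ω = x})) = {ω | Y ω = y} := by
      ext ω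
      simp only [Set.mem_iUnion, Set.mem_inter_iff, Set.mem_setOf_eq]
      exact ⟨fun ⟨x, h⟩ => h.1, fun h => ⟨X ω, h, rfl⟩⟩
    have := (part_tsum μ (fun x => {ω | Y ω = y} ∩ {ω | X ω = x})
      (fun x => (hY y).inter (hX x)) hd).2
    rw [hu, tsum_fintype] at this
    exact this.symm
  -- determinism: B is empty or all of A
  have hBA : ∀ y x l, B y x l = ∅ ∨ B y x l = A x l := by
    intro y x l
    rcases Set.eq_empty_or_nonempty (B y x l) with h | h
    · exact Or.inl h
    · right
      obtain ⟨ω₀, hω₀⟩ := h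
      refine Set.Subset.antisymm Set.inter_subset_right fun ω hω => ⟨?_, hω⟩
      have hx : X ω = X ω₀ := hω.1.trans hω₀.2.1.symm
      have hc' : c ω = c ω₀ := hω.2.trans hω₀.2.2.symm
      exact (hdet ω ω₀ hx hc').trans hω₀.1
  have hPleY : ∀ y x l, R y x l ≠ 0 → P x l ≤ py y := by
    intro y x l hR
    rcases hBA y x l with h | h
    · exact absurd (by rw [hRdef]; simp [h]) hR
    · have hsub : A x l ⊆ {ω | Y ω = y} := by
        rw [← h]; exact Set.inter_subset_left
      exact ENNReal.toReal_mono (measure_ne_top μ _) (measure_mono hsub)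
  -- Kraft
  set g : 𝒳 → ↥(Set.range c) → ℝ :=
    fun x l => if ∃ ω, X ω = x ∧ c ω = ↑l then (2:ℝ)⁻¹ ^ (l : List Bool).length else 0 with hg
  have hg_nonneg : ∀ x l, 0 ≤ g x l := by
    intro x l
    rw [hg]
    dsimp only
    split <;> positivity
  have hg_sum_le : ∀ x (u : Finset ↥(Set.range c)), ∑ l ∈ u, g x l ≤ 1 := by
    intro x u
    set s : Finset (List Bool) :=
      (u.filter (fun l : ↥(Set.range c) => ∃ ω, X ω = x ∧ c ω = (l : List Bool))).image Subtype.val with hs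
    have heq : ∑ l ∈ u, g x l = ∑ w ∈ s, (2:ℝ)⁻¹ ^ w.length := by
      rw [hs, Finset.sum_image (fun a _ b _ h => Subtype.ext h), Finset.sum_filter]
    rw [heq]
    apply kraft_finset
    intro w hw w' hw' hpre
    simp only [hs, Finset.mem_image, Finset.mem_filter] at hw hw'
    obtain ⟨lw, ⟨-, ω, hω1, hω2⟩, rfl⟩ := hw
    obtain ⟨lw', ⟨-, ω', hω1', hω2'⟩, rfl⟩ := hw'
    have : c ω = c ω' := hpref ω ω' (hω1.trans hω1'.symm) (by rw [hω2, hω2']; exact hpre)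
    rw [← hω2, ← hω2', this]
  have hgsummable : ∀ x, Summable (g x) :=
    fun x => summable_of_sum_le (fun l => hg_nonneg x l) (hg_sum_le x)
  have hgtsum_le : ∀ x, ∑' l, g x l ≤ 1 :=
    fun x => Summable.tsum_le_of_sum_le (hgsummable x) (hg_sum_le x)
  set q : 𝒳 → ↥(Set.range c) → ℝ := fun x l => p x * g x l with hq
  have hq_nonneg : ∀ x l, 0 ≤ q x l := fun x l => mul_nonneg (pnn x) (hg_nonneg x l)
  have hq_summable : ∀ x, Summable (q x) := fun x => (hgsummable x).mul_left (p x)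
  have hqtsum_le : ∀ x, ∑' l, q x l ≤ p x := by
    intro x
    rw [hq]
    dsimp only
    rw [Summable.tsum_mul_left (p x) (hgsummable x)]
    calc p x * ∑' l, g x l ≤ p x * 1 := mul_le_mul_of_nonneg_left (hgtsum_le x) (pnn x)
      _ = p x := mul_one _
  -- expected length
  have K1 : ∫⁻ ω, (((c ω).length : ℕ) : ℝ≥0∞) ∂μ ≠ ⊤ := by
    have h : ∫⁻ ω, (‖((c ω).length : ℝ)‖₊ : ℝ≥0∞) ∂μ < ⊤ := hInt.hasFiniteIntegral
    have he : ∫⁻ ω, (((c ω).length : ℕ) : ℝ≥0∞) ∂μ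
        = ∫⁻ ω, (‖((c ω).length : ℝ)‖₊ : ℝ≥0∞) ∂μ := lintegral_congr (fun ω => by simp)
    rw [he]
    exact h.ne
  have K2 : ∀ x, ∫⁻ ω in {ω | X ω = x}, (((c ω).length : ℕ) : ℝ≥0∞) ∂μ = (∑' l : ↥(Set.range c), ((l : List Bool).length : ℝ≥0∞) * μ (A x l)) := by
    intro x
    rw [← unionA x, lintegral_iUnion (measA x) (disjA x)]
    refine tsum_congr fun l => ?_
    rw [setLIntegral_congr_fun_ae (measA x l)
      (Filter.Eventually.of_forall (fun ω hω => by rw [((memA x l ω).mp hω).2])), setLIntegral_const]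
  have K3 : ∑ x : 𝒳, ∫⁻ ω in {ω | X ω = x}, (((c ω).length : ℕ) : ℝ≥0∞) ∂μ
      = ∫⁻ ω, (((c ω).length : ℕ) : ℝ≥0∞) ∂μ := by
    have hu : (⋃ x, {ω | X ω = x}) = Set.univ :=
      Set.eq_univ_of_forall fun ω => Set.mem_iUnion.mpr ⟨X ω, rfl⟩
    have hd : Pairwise (Function.onFun Disjoint (fun x => {ω | X ω = x})) := by
      intro x x' hne
      refine Set.disjoint_left.mpr fun ω h1 h2 => hne ?_
      exact h1.symm.trans h2
    rw [← setLIntegral_univ, ← hu, lintegral_iUnion hX hd, tsum_fintype]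
  have K4 : ∀ x, (∑' l : ↥(Set.range c), ((l : List Bool).length : ℝ≥0∞) * μ (A x l)) ≠ ⊤ := by
    intro x
    rw [← K2 x]
    exact ne_top_of_le_ne_top K1 (setLIntegral_le_lintegral _ _)
  have K5s : ∀ x, Summable (fun l => P x l * ((l : List Bool).length : ℝ)) := by
    intro x
    refine (ENNReal.summable_toReal (K4 x)).congr fun l => ?_
    rw [ENNReal.toReal_mul, ENNReal.toReal_natCast, mul_comm, hPdef]
  have K5 : ∀ x, ∑' l, P x l * ((l : List Bool).length : ℝ) = ((∑' l : ↥(Set.range c), ((l : List Bool).length : ℝ≥0∞) * μ (A x l))).toReal := by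
    intro x
    rw [ENNReal.tsum_toReal_eq
      (fun l => ENNReal.mul_ne_top (ENNReal.natCast_ne_top _) (measure_ne_top μ _))]
    refine tsum_congr fun l => ?_
    rw [ENNReal.toReal_mul, ENNReal.toReal_natCast, mul_comm]
  have K6 : ∫ ω, ((c ω).length : ℝ) ∂μ = (∫⁻ ω, (((c ω).length : ℕ) : ℝ≥0∞) ∂μ).toReal := by
    rw [integral_eq_lintegral_of_nonneg_ae (Filter.Eventually.of_forall fun ω => by positivity)
      hInt.aestronglyMeasurable]
    congr 1
    exact lintegral_congr fun ω => by simp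
  have K7 : ∑ x : 𝒳, ((∑' l : ↥(Set.range c), ((l : List Bool).length : ℝ≥0∞) * μ (A x l))).toReal = ∫ ω, ((c ω).length : ℝ) ∂μ := by
    rw [← ENNReal.toReal_sum (fun x _ => K4 x), K6]
    congr 1
    rw [← K3]
    exact Finset.sum_congr rfl fun x _ => (K2 x).symm
  -- main termwise inequality
  set a : 𝒳 → ↥(Set.range c) → ℝ := fun x l => P x l * Real.logb 2 (1 / P x l) with ha
  set b : 𝒳 → ↥(Set.range c) → ℝ := fun x l =>
    (q x l - P x l) / Real.log 2 + P x l * ((l : List Bool).length : ℝ)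
      + P x l * Real.logb 2 (1 / p x) with hb
  have lognn : ∀ x l, 0 ≤ Real.logb 2 (1 / P x l) := by
    intro x l
    rcases eq_or_lt_of_le (Pnn x l) with h0 | hpos
    · rw [← h0]
      simp
    · exact Real.logb_nonneg one_lt_two (one_le_one_div hpos (Ple1 x l))
  have a_nonneg : ∀ x l, 0 ≤ a x l := fun x l => mul_nonneg (Pnn x l) (lognn x l)
  have hab : ∀ x l, a x l ≤ b x l := by
    intro x l
    rcases eq_or_lt_of_le (Pnn x l) with h0 | hpos
    · rw [ha, hb]
      dsimp only
      rw [← h0]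
      simp only [zero_mul, mul_zero, sub_zero, add_zero, zero_add]
      have := hq_nonneg x l
      have := Real.log_pos one_lt_two
      positivity
    · have hApos : (A x l).Nonempty := by
        rw [Set.nonempty_iff_ne_empty]
        intro h
        have h0 : P x l = 0 := by rw [hPdef]; simp [h]
        rw [h0] at hpos
        exact lt_irrefl _ hpos
      obtain ⟨ω₀, hω₀⟩ := hApos
      have hcond : ∃ ω, X ω = x ∧ c ω = ↑l := ⟨ω₀, hω₀.1, hω₀.2⟩
      have hgl : g x l = (2:ℝ)⁻¹ ^ (l : List Bool).length := by rw [hg]; exact if_pos hcond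
      have hpxpos : 0 < p x := lt_of_lt_of_le hpos (PleP x l)
      have hqpos : 0 < q x l := by rw [hq]; dsimp only; rw [hgl]; positivity
      have h1q : 1 / q x l = (1 / p x) * (2:ℝ) ^ (l : List Bool).length := by
        rw [hq]
        dsimp only
        rw [hgl]
        rw [inv_pow]
        field_simp
      have hlogq : Real.logb 2 (1 / q x l)
          = Real.logb 2 (1 / p x) + ((l : List Bool).length : ℝ) := by
        rw [h1q, Real.logb_mul (by positivity) (by positivity), Real.logb_pow,
          Real.logb_self_eq_one one_lt_two, mul_one]
      have hsplit : Real.logb 2 (1 / P x l)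
          = Real.logb 2 (q x l / P x l) + Real.logb 2 (1 / q x l) := by
        rw [← Real.logb_mul (by positivity) (by positivity)]
        congr 1
        field_simp
      have hmul : P x l * Real.logb 2 (q x l / P x l) ≤ (q x l - P x l) / Real.log 2 := by
        have hlog_le : Real.logb 2 (q x l / P x l) ≤ (q x l / P x l - 1) / Real.log 2 := by
          rw [Real.logb]
          exact (div_le_div_iff_of_pos_right (Real.log_pos one_lt_two)).mpr
            (Real.log_le_sub_one_of_pos (by positivity))
        calc P x l * Real.logb 2 (q x l / P x l)
            ≤ P x l * ((q x l / P x l - 1) / Real.log 2) :=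
              mul_le_mul_of_nonneg_left hlog_le (le_of_lt hpos)
          _ = (q x l - P x l) / Real.log 2 := by
              field_simp
      calc a x l = P x l * Real.logb 2 (q x l / P x l)
            + (P x l * ((l : List Bool).length : ℝ) + P x l * Real.logb 2 (1 / p x)) := by
            rw [ha]
            dsimp only
            rw [hsplit, hlogq]
            ring
        _ ≤ (q x l - P x l) / Real.log 2
            + (P x l * ((l : List Bool).length : ℝ) + P x l * Real.logb 2 (1 / p x)) :=
            add_le_add_left hmul _
        _ = b x l := by rw [hb]; ring
  have hb_summable : ∀ x, Summable (b x) := by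
    intro x
    exact ((((hq_summable x).sub (hsumP x)).div_const _).add (K5s x)).add
      ((hsumP x).mul_right _)
  have ha_summable : ∀ x, Summable (a x) :=
    fun x => Summable.of_nonneg_of_le (a_nonneg x) (hab x) (hb_summable x)
  have Jx_bound : ∀ x, ∑' l, a x l ≤ ((∑' l : ↥(Set.range c), ((l : List Bool).length : ℝ≥0∞) * μ (A x l))).toReal + p x * Real.logb 2 (1 / p x) := by
    intro x
    have h1 : ∑' l, b x l = (∑' l, q x l - p x) / Real.log 2 + ((∑' l : ↥(Set.range c), ((l : List Bool).length : ℝ≥0∞) * μ (A x l))).toReal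
        + p x * Real.logb 2 (1 / p x) := by
      rw [hb]
      dsimp only
      rw [Summable.tsum_add ((((hq_summable x).sub (hsumP x)).div_const _).add (K5s x))
        ((hsumP x).mul_right _)]
      rw [Summable.tsum_add (((hq_summable x).sub (hsumP x)).div_const _) (K5s x)]
      rw [tsum_div_const, Summable.tsum_sub (hq_summable x) (hsumP x), htsumP, K5,
        Summable.tsum_mul_right _ (hsumP x), htsumP]
    have h2 : (∑' l, q x l - p x) / Real.log 2 ≤ 0 :=
      div_nonpos_of_nonpos_of_nonneg (sub_nonpos.mpr (hqtsum_le x)) (Real.log_nonneg one_le_two)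
    calc ∑' l, a x l ≤ ∑' l, b x l := Summable.tsum_le_tsum (hab x) (ha_summable x) (hb_summable x)
      _ = (∑' l, q x l - p x) / Real.log 2 + ((∑' l : ↥(Set.range c), ((l : List Bool).length : ℝ≥0∞) * μ (A x l))).toReal + p x * Real.logb 2 (1 / p x) := h1
      _ ≤ 0 + ((∑' l : ↥(Set.range c), ((l : List Bool).length : ℝ≥0∞) * μ (A x l))).toReal + p x * Real.logb 2 (1 / p x) := by
          gcongr
      _ = ((∑' l : ↥(Set.range c), ((l : List Bool).length : ℝ≥0∞) * μ (A x l))).toReal + p x * Real.logb 2 (1 / p x) := by ring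
  -- step I
  have hsumRa : ∀ y x, Summable (fun l => R y x l * Real.logb 2 (1 / P x l)) := by
    intro y x
    refine Summable.of_nonneg_of_le (fun l => mul_nonneg (Rnn y x l) (lognn x l))
      (fun l => mul_le_mul_of_nonneg_right (RleP y x l) (lognn x l)) (ha_summable x)
  have step1 : ∀ y, py y * Real.logb 2 (1 / py y)
      ≤ ∑ x : 𝒳, ∑' l, R y x l * Real.logb 2 (1 / P x l) := by
    intro y
    have hy : py y = ∑ x : 𝒳, ∑' l, R y x l := by
      rw [hpyx y]
      exact Finset.sum_congr rfl fun x _ => (htsumR y x).symm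
    calc py y * Real.logb 2 (1 / py y)
        = ∑ x : 𝒳, (∑' l, R y x l) * Real.logb 2 (1 / py y) := by
          rw [← Finset.sum_mul, ← hy]
      _ = ∑ x : 𝒳, ∑' l, R y x l * Real.logb 2 (1 / py y) :=
          Finset.sum_congr rfl fun x _ => (Summable.tsum_mul_right _ (hsumR y x)).symm
      _ ≤ ∑ x : 𝒳, ∑' l, R y x l * Real.logb 2 (1 / P x l) := by
          refine Finset.sum_le_sum fun x _ => Summable.tsum_le_tsum (fun l => ?_)
            ((hsumR y x).mul_right _) (hsumRa y x)
          rcases eq_or_ne (R y x l) 0 with h0 | h0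
          · rw [h0, zero_mul, zero_mul]
          · have hRpos : 0 < R y x l := lt_of_le_of_ne (Rnn y x l) (Ne.symm h0)
            have hPpos : 0 < P x l := lt_of_lt_of_le hRpos (RleP y x l)
            have hpy : P x l ≤ py y := hPleY y x l h0
            have hpypos : 0 < py y := lt_of_lt_of_le hPpos hpy
            refine mul_le_mul_of_nonneg_left ?_ (Rnn y x l)
            exact (Real.logb_le_logb one_lt_two (by positivity) (by positivity)).mpr
              (one_div_le_one_div_of_le hPpos hpy)
  -- assemble
  have hHY : shannonEntropy μ Y = ∑ y : 𝒴, py y * Real.logb 2 (1 / py y) := rfl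
  have hHX : shannonEntropy μ X = ∑ x : 𝒳, p x * Real.logb 2 (1 / p x) := rfl
  calc shannonEntropy μ Y = ∑ y : 𝒴, py y * Real.logb 2 (1 / py y) := hHY
    _ ≤ ∑ y : 𝒴, ∑ x : 𝒳, ∑' l, R y x l * Real.logb 2 (1 / P x l) :=
        Finset.sum_le_sum fun y _ => step1 y
    _ = ∑ x : 𝒳, ∑ y : 𝒴, ∑' l, R y x l * Real.logb 2 (1 / P x l) := Finset.sum_comm
    _ = ∑ x : 𝒳, ∑' l, ∑ y : 𝒴, R y x l * Real.logb 2 (1 / P x l) :=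
        Finset.sum_congr rfl fun x _ => (Summable.tsum_finsetSum (fun y _ => hsumRa y x)).symm
    _ = ∑ x : 𝒳, ∑' l, a x l := by
        refine Finset.sum_congr rfl fun x _ => tsum_congr fun l => ?_
        rw [← Finset.sum_mul, sumRy x l, ha]
    _ ≤ ∑ x : 𝒳, (((∑' l : ↥(Set.range c), ((l : List Bool).length : ℝ≥0∞) * μ (A x l))).toReal + p x * Real.logb 2 (1 / p x)) :=
        Finset.sum_le_sum fun x _ => Jx_bound x
    _ = ∑ x : 𝒳, ((∑' l : ↥(Set.range c), ((l : List Bool).length : ℝ≥0∞) * μ (A x l))).toReal + ∑ x : 𝒳, p x * Real.logb 2 (1 / p x) := Finset.sum_add_distrib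
    _ = shannonEntropy μ X + ∫ ω, ((c ω).length : ℝ) ∂μ := by rw [K7, hHX, add_comm]
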